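/- For every 0 < p ≤ 1, the inclusion H^p(ℤⁿ) ⊂ ℓ^p(ℤⁿ) holds with ‖b‖_{ℓ^p} ≤ ‖b‖_{H^p}, and the inclusion is strict: there exists b ∈ ℓ^p(ℤⁿ) with b ∉ H^p(ℤⁿ). -/

import Mathlib

open scoped BigOperators ENNReal

noncomputable section

/-- Euclidean norm of an integer vector in `ℤⁿ`. -/
def znorm {n : ℕ} (j : Fin n → ℤ) : ℝ := Real.sqrt (∑ l, ((j l : ℝ)) ^ 2)

/-- `ℓ^∞` norm of an integer vector, as a natural number. -/
def zinf {n : ℕ} (j : Fin n → ℤ) : ℕ := Finset.univ.sup fun l => (j l).natAbs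

/-- The discrete cube centered at `k0` with "radius" `m` (side length `2m+1`),
i.e. `{i : |i - k0|_∞ ≤ m}`. -/
def dcube {n : ℕ} (k0 : Fin n → ℤ) (m : ℕ) : Finset (Fin n → ℤ) :=
  Finset.Icc (fun l => k0 l - m) (fun l => k0 l + m)

/-- The discrete Riesz potential `(I_α b)(j) = ∑_{i ≠ j} b(i) |i-j|^{α-n}`. -/
def rieszPot {n : ℕ} (α : ℝ) (b : (Fin n → ℤ) → ℝ) (j : Fin n → ℤ) : ℝ :=
  ∑' i : {i : Fin n → ℤ // i ≠ j}, b i.1 * znorm (i.1 - j) ^ (α - n)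

/-- Embedding of `ℤⁿ` into Euclidean space `ℝⁿ`. -/
def toE {n : ℕ} (j : Fin n → ℤ) : EuclideanSpace ℝ (Fin n) := WithLp.toLp 2 (fun l => (j l : ℝ))

/-- The discretized dilation `Φ_t^d(j) = t^{-n} Φ(j/t)` for `j ≠ 0`, and `Φ_t^d(0) = 0`. -/
def phid {n : ℕ} (Φ : SchwartzMap (EuclideanSpace ℝ (Fin n)) ℝ) (t : ℝ) (j : Fin n → ℤ) : ℝ :=
  if j = 0 then 0 else t ^ (-(n : ℝ)) * Φ (t⁻¹ • toE j)

/-- Discrete convolution `(b ∗ c)(j) = ∑_i b(i) c(j-i)`. -/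
def dconv {n : ℕ} (b c : (Fin n → ℤ) → ℝ) (j : Fin n → ℤ) : ℝ :=
  ∑' i : Fin n → ℤ, b i * c (j - i)

/-- The maximal function `sup_{t>0} |(Φ_t^d ∗ b)(j)|`, valued in `ℝ≥0∞`. -/
def maxFn {n : ℕ} (Φ : SchwartzMap (EuclideanSpace ℝ (Fin n)) ℝ) (b : (Fin n → ℤ) → ℝ)
    (j : Fin n → ℤ) : ℝ≥0∞ :=
  ⨆ (t : ℝ) (_ : 0 < t), ENNReal.ofReal |dconv (phid Φ t) b j|

/-- The `ℓ^p` quasinorm (`0 < p < ∞`) of a real sequence on `ℤⁿ`, valued in `ℝ≥0∞`. -/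
def elp {n : ℕ} (p : ℝ) (f : (Fin n → ℤ) → ℝ) : ℝ≥0∞ :=
  (∑' j : Fin n → ℤ, ENNReal.ofReal |f j| ^ p) ^ (1 / p)

/-- The `ℓ^p` quasinorm of an `ℝ≥0∞`-valued sequence on `ℤⁿ`. -/
def elpE {n : ℕ} (p : ℝ) (f : (Fin n → ℤ) → ℝ≥0∞) : ℝ≥0∞ :=
  (∑' j : Fin n → ℤ, f j ^ p) ^ (1 / p)

/-- The discrete Hardy space quasinorm `‖b‖_{H^p} = ‖b‖_{ℓ^p} + ‖sup_{t>0}|Φ_t^d ∗ b|‖_{ℓ^p}`. -/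
def hpNorm {n : ℕ} (Φ : SchwartzMap (EuclideanSpace ℝ (Fin n)) ℝ) (p : ℝ)
    (b : (Fin n → ℤ) → ℝ) : ℝ≥0∞ :=
  elp p b + elpE p (maxFn Φ b)

/-- A `(p, ∞, N)`-atom supported in the discrete cube `dcube k0 m`. -/
def IsDiscreteAtom {n : ℕ} (p : ℝ) (N : ℕ) (k0 : Fin n → ℤ) (m : ℕ)
    (a : (Fin n → ℤ) → ℝ) : Prop :=
  (∀ j, j ∉ dcube k0 m → a j = 0) ∧
  (∀ j, |a j| ≤ ((dcube k0 m).card : ℝ) ^ (-(1 / p))) ∧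
  (∀ β : Fin n → ℕ, (∑ l, β l) ≤ N →
    ∑ j ∈ dcube k0 m, (∏ l, ((j l : ℝ)) ^ β l) * a j = 0)

/-- The centered discrete fractional maximal operator
`(M_α b)(j) = sup_m (#Q_{j,m})^{α/n - 1} ∑_{i ∈ Q_{j,m}} |b(i)|`. -/
def fracMax {n : ℕ} (α : ℝ) (b : (Fin n → ℤ) → ℝ) (j : Fin n → ℤ) : ℝ≥0∞ :=
  ⨆ m : ℕ, ENNReal.ofReal
    ((((dcube j m).card : ℝ) ^ (α / n - 1)) * ∑ i ∈ dcube j m, |b i|)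

/-- The Taylor polynomial of degree `N - 1` of `f` centered at `c`, evaluated at `x`. -/
def taylorPoly {n : ℕ} (f : EuclideanSpace ℝ (Fin n) → ℝ) (c x : EuclideanSpace ℝ (Fin n))
    (N : ℕ) : ℝ :=
  ∑ r ∈ Finset.range N, (1 / r.factorial : ℝ) * iteratedFDeriv ℝ r f c (fun _ => x - c)

/-!
Take `b = δ₀`. Off the origin, `sup_{t>0} |Φ_t^d ∗ δ₀|(j) = sup_{t>0} t^{-n} |Φ(j/t)|`. Choose a
sup-norm ball `B(y₀, ε)` on which `|Φ| ≥ c > 0`, with `3ε < ‖y₀‖`. For a scale `t ≥ 1` the lattice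
points of `t • B(y₀, ε)` contain a discrete cube with at least `(εt/2)^n` points, at each of which
the maximal function is at least `c t^{-n}`; since `p ≤ 1` and `t ≥ 1`, their contribution to the
`ℓ^p` sum is at least `(ε/2)^n c^p`, independently of `t`. Because `3ε < ‖y₀‖`, the dilates for the
dyadic scales `t = 2^s T` are pairwise disjoint, so the `ℓ^p` sum of the maximal function diverges.
-/

open Function Metric

theorem ENNReal.tsum_eq_top_of_le_sum_of_pairwise_disjoint {ι : Type*} (f : ι → ℝ≥0∞)
    (B : ℕ → Finset ι) (hB : Pairwise (Disjoint on B)) {δ : ℝ≥0∞} (hδ : δ ≠ 0)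
    (h : ∀ s, δ ≤ ∑ j ∈ B s, f j) : ∑' j, f j = ⊤ := by
  have hB' : Set.univ.PairwiseDisjoint fun s => (B s : Set ι) :=
    fun s _ s' _ hss' => Finset.disjoint_coe.2 (hB hss')
  refine eq_top_iff.2 ?_
  calc ⊤ = ∑' _ : ℕ, δ := (ENNReal.tsum_const_eq_top_of_ne_zero hδ).symm
    _ ≤ ∑' s, ∑ j ∈ B s, f j := ENNReal.tsum_le_tsum h
    _ = ∑' s, ∑' j : (B s : Set ι), f j := by simp only [Finset.coe_sort_coe, Finset.tsum_subtype]
    _ = ∑' j : ⋃ s, (B s : Set ι), f j := (ENNReal.tsum_biUnion hB').symm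
    _ ≤ ∑' j, f j := ENNReal.tsum_comp_le_tsum_of_injective Subtype.val_injective f

theorem exists_closedBall_le_abs_of_ne_zero {E : Type*} [NormedAddCommGroup E] [NormedSpace ℝ E]
    [Nontrivial E] {ψ : E → ℝ} (hψ : Continuous ψ) (hψ0 : ψ ≠ 0) :
    ∃ y₀ : E, ∃ ε c : ℝ, 0 < ε ∧ 3 * ε < ‖y₀‖ ∧ 0 < c ∧ ∀ y ∈ closedBall y₀ ε, c ≤ |ψ y| := by
  obtain ⟨y₀, hy₀ψ, hy₀⟩ : ({y | ψ y ≠ 0} ∩ {0}ᶜ).Nonempty :=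
    (dense_compl_singleton 0).inter_open_nonempty _ (isOpen_ne_fun hψ continuous_const)
      (Function.ne_iff.1 hψ0)
  have hy₀pos : 0 < ‖y₀‖ := norm_pos_iff.2 hy₀
  have hc : 0 < |ψ y₀| / 2 := half_pos (abs_pos.2 hy₀ψ)
  obtain ⟨ε, hε, hball⟩ := nhds_basis_closedBall.eventually_iff.1 <|
    (hψ.abs.continuousAt (x := y₀)).eventually (eventually_ge_nhds (half_lt_self (abs_pos.2 hy₀ψ)))
  refine ⟨y₀, min ε (‖y₀‖ / 4), |ψ y₀| / 2, by positivity, by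
    linarith [min_le_right ε (‖y₀‖ / 4)], hc, fun y hy => hball ?_⟩
  exact closedBall_subset_closedBall (min_le_left _ _) hy

theorem smul_ne_smul_of_mem_closedBall {E : Type*} [NormedAddCommGroup E] [NormedSpace ℝ E]
    {y₀ u u' : E} {ε t t' : ℝ} (hε : 3 * ε < ‖y₀‖) (ht : 0 < t) (htt' : 2 * t ≤ t')
    (hu : u ∈ closedBall y₀ ε) (hu' : u' ∈ closedBall y₀ ε) : t • u ≠ t' • u' := by
  rw [mem_closedBall, dist_eq_norm] at hu hu'
  have hu_le : ‖u‖ ≤ ‖y₀‖ + ε := by linarith [norm_le_norm_add_norm_sub' u y₀]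
  have hu'_ge : ‖y₀‖ - ε ≤ ‖u'‖ := by
    linarith [norm_le_norm_add_norm_sub' y₀ u', norm_sub_rev y₀ u']
  intro h
  have := congrArg norm h
  rw [norm_smul, norm_smul, Real.norm_of_nonneg ht.le,
    Real.norm_of_nonneg (by linarith)] at this
  nlinarith [mul_le_mul_of_nonneg_left hu_le ht.le, mul_le_mul_of_nonneg_left hu'_ge ht.le,
    mul_le_mul_of_nonneg_right htt' (norm_nonneg u')]

theorem card_dcube {n : ℕ} (k₀ : Fin n → ℤ) (m : ℕ) : (dcube k₀ m).card = (2 * m + 1) ^ n := by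
  have hIcc (l : Fin n) : (Finset.Icc (k₀ l - m) (k₀ l + m)).card = 2 * m + 1 := by
    rw [Int.card_Icc]; omega
  simp [dcube, Pi.card_Icc, hIcc]

def latticeBox {n : ℕ} (y₀ : Fin n → ℝ) (ε t : ℝ) : Finset (Fin n → ℤ) :=
  dcube (fun l => round (t * y₀ l)) ⌊ε * t / 2⌋₊

theorem card_latticeBox_ge {n : ℕ} (y₀ : Fin n → ℝ) {ε t : ℝ} (hεt : 0 ≤ ε * t) :
    (ε * t / 2) ^ n ≤ (latticeBox y₀ ε t).card := by
  rw [latticeBox, card_dcube]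
  push_cast
  gcongr
  linarith [Nat.lt_floor_add_one (ε * t / 2), (Nat.cast_nonneg ⌊ε * t / 2⌋₊ : (0 : ℝ) ≤ _)]

theorem inv_smul_mem_closedBall_of_mem_latticeBox {n : ℕ} {y₀ : Fin n → ℝ} {ε t : ℝ}
    (ht : 0 < t) (hεt : 1 ≤ ε * t) {j : Fin n → ℤ} (hj : j ∈ latticeBox y₀ ε t) :
    t⁻¹ • (fun l => (j l : ℝ)) ∈ closedBall y₀ ε := by
  rw [mem_closedBall, dist_eq_norm, pi_norm_le_iff_of_nonneg (by nlinarith)]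
  intro l
  have hjl : |j l - round (t * y₀ l)| ≤ (⌊ε * t / 2⌋₊ : ℤ) := by
    simp only [latticeBox, dcube, Finset.mem_Icc] at hj
    have := hj.1 l; have := hj.2 l
    rw [abs_le]; constructor <;> linarith
  have hjl' : |(j l : ℝ) - round (t * y₀ l)| ≤ ε * t / 2 :=
    (by exact_mod_cast hjl : |(j l : ℝ) - round (t * y₀ l)| ≤ (⌊ε * t / 2⌋₊ : ℝ)).trans
      (Nat.floor_le (by linarith))
  have hround := abs_sub_round (t * y₀ l)
  have hcoord : |(j l : ℝ) - t * y₀ l| ≤ ε * t := by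
    calc |(j l : ℝ) - t * y₀ l|
        ≤ |(j l : ℝ) - round (t * y₀ l)| + |t * y₀ l - round (t * y₀ l)| := by
          rw [abs_sub_comm (t * y₀ l)]; exact abs_sub_le _ _ _
      _ ≤ ε * t := by linarith
  have hl : (t⁻¹ • (fun l => (j l : ℝ)) - y₀) l = ((j l : ℝ) - t * y₀ l) / t := by
    simp only [Pi.sub_apply, Pi.smul_apply, smul_eq_mul]; field_simp
  rw [Real.norm_eq_abs, hl, abs_div, abs_of_pos ht, div_le_iff₀ ht]
  exact hcoord

theorem dconv_single_zero {n : ℕ} (c : (Fin n → ℤ) → ℝ) : dconv c (Pi.single 0 1) = c := by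
  ext j
  rw [dconv, tsum_eq_single j (fun i hij => by simp [sub_eq_zero, Ne.symm hij])]
  simp

theorem elp_single_zero {n : ℕ} {p : ℝ} (hp : 0 < p) :
    elp p (Pi.single (0 : Fin n → ℤ) (1 : ℝ)) = 1 := by
  rw [elp, tsum_eq_single 0 (fun j hj => by simp [hj, hp])]
  simp

theorem ofReal_abs_phid_le_maxFn_single_zero {n : ℕ} (Φ : SchwartzMap (EuclideanSpace ℝ (Fin n)) ℝ)
    {t : ℝ} (ht : 0 < t) (j : Fin n → ℤ) :
    ENNReal.ofReal |phid Φ t j| ≤ maxFn Φ (Pi.single 0 1) j := by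
  rw [maxFn, ← dconv_single_zero (phid Φ t)]
  exact le_iSup₂_of_le t ht le_rfl

theorem le_sum_latticeBox_maxFn_single_zero_rpow {n : ℕ}
    (Φ : SchwartzMap (EuclideanSpace ℝ (Fin n)) ℝ) {y₀ : Fin n → ℝ} {ε c t p : ℝ}
    (hε : ε < ‖y₀‖) (hc : 0 < c) (hball : ∀ y ∈ closedBall y₀ ε, c ≤ |Φ (WithLp.toLp 2 y)|)
    (ht : 1 ≤ t) (hεt : 1 ≤ ε * t) (hp : 0 < p) (hp1 : p ≤ 1) :
    ENNReal.ofReal ((ε / 2) ^ n * c ^ p) ≤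
      ∑ j ∈ latticeBox y₀ ε t, maxFn Φ (Pi.single 0 1) j ^ p := by
  have ht0 : 0 < t := by linarith
  have htn : 0 < t ^ (-(n : ℝ)) := Real.rpow_pos_of_pos ht0 _
  have hpoint : ∀ j ∈ latticeBox y₀ ε t,
      ENNReal.ofReal ((t ^ (-(n : ℝ)) * c) ^ p) ≤ maxFn Φ (Pi.single 0 1) j ^ p := by
    intro j hj
    have hu := inv_smul_mem_closedBall_of_mem_latticeBox ht0 hεt hj
    have hj0 : j ≠ 0 := by
      rintro rfl
      rw [Pi.zero_def, mem_closedBall] at hu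
      simp only [Int.cast_zero, ← Pi.zero_def, smul_zero, dist_zero_left] at hu
      linarith
    rw [← ENNReal.ofReal_rpow_of_nonneg (by positivity) hp.le]
    refine ENNReal.rpow_le_rpow (le_trans ?_ (ofReal_abs_phid_le_maxFn_single_zero Φ ht0 j)) hp.le
    refine ENNReal.ofReal_le_ofReal ?_
    rw [phid, if_neg hj0, abs_mul, abs_of_pos htn, toE, ← WithLp.toLp_smul]
    exact mul_le_mul_of_nonneg_left (hball _ hu) htn.le
  have hreal : (ε / 2) ^ n * c ^ p ≤ (latticeBox y₀ ε t).card * (t ^ (-(n : ℝ)) * c) ^ p :=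
    calc (ε / 2) ^ n * c ^ p = (ε * t / 2) ^ n * t ^ (-(n : ℝ)) * c ^ p := by
          rw [Real.rpow_neg ht0.le, Real.rpow_natCast, mul_div_right_comm, mul_pow]; field_simp
      _ ≤ (latticeBox y₀ ε t).card * t ^ (-(n : ℝ)) * c ^ p := by
          gcongr; exact card_latticeBox_ge y₀ (by linarith)
      _ ≤ (latticeBox y₀ ε t).card * (t ^ (-(n : ℝ))) ^ p * c ^ p := by
          gcongr
          exact Real.self_le_rpow_of_le_one htn.le
            (Real.rpow_le_one_of_one_le_of_nonpos ht (by simp)) hp1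
      _ = (latticeBox y₀ ε t).card * (t ^ (-(n : ℝ)) * c) ^ p := by
          rw [Real.mul_rpow htn.le hc.le, mul_assoc]
  calc ENNReal.ofReal ((ε / 2) ^ n * c ^ p)
      ≤ ENNReal.ofReal ((latticeBox y₀ ε t).card * (t ^ (-(n : ℝ)) * c) ^ p) :=
        ENNReal.ofReal_le_ofReal hreal
    _ = (latticeBox y₀ ε t).card • ENNReal.ofReal ((t ^ (-(n : ℝ)) * c) ^ p) := by
        rw [ENNReal.ofReal_mul (by positivity), nsmul_eq_mul, ENNReal.ofReal_natCast]
    _ ≤ _ := Finset.card_nsmul_le_sum _ _ _ hpoint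

theorem tsum_maxFn_single_zero_rpow_eq_top {n : ℕ} (hn : 0 < n)
    {Φ : SchwartzMap (EuclideanSpace ℝ (Fin n)) ℝ} (hΦ : Φ ≠ 0) {p : ℝ} (hp : 0 < p)
    (hp1 : p ≤ 1) : ∑' j, maxFn Φ (Pi.single 0 1) j ^ p = ⊤ := by
  have : Nonempty (Fin n) := ⟨⟨0, hn⟩⟩
  have hψ : (fun y : Fin n → ℝ => Φ (WithLp.toLp 2 y)) ≠ 0 := by
    contrapose! hΦ
    ext x
    simpa using congrFun hΦ x.ofLp
  obtain ⟨y₀, ε, c, hε, hεy₀, hc, hball⟩ :=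
    exists_closedBall_le_abs_of_ne_zero (Φ.continuous.comp (PiLp.continuous_toLp 2 _)) hψ
  set t : ℕ → ℝ := fun s => 2 ^ s * max 1 ε⁻¹
  have ht (s : ℕ) : 1 ≤ t s :=
    one_le_mul_of_one_le_of_one_le (one_le_pow₀ one_le_two) (le_max_left _ _)
  have hεt (s : ℕ) : 1 ≤ ε * t s := by
    have : 1 ≤ ε * max 1 ε⁻¹ :=
      (mul_inv_cancel₀ hε.ne').symm.le.trans (by gcongr; exact le_max_right _ _)
    calc 1 ≤ 2 ^ s * (ε * max 1 ε⁻¹) := one_le_mul_of_one_le_of_one_le (one_le_pow₀ one_le_two) this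
      _ = ε * t s := by ring
  have ht₀ (s : ℕ) : 0 < t s := zero_lt_one.trans_le (ht s)
  have hdisj : Pairwise (Disjoint on fun s => latticeBox y₀ ε (t s)) := by
    rw [pairwise_disjoint_on]
    intro s s' hss'
    rw [Finset.disjoint_left]
    intro j hj hj'
    have h2t : 2 * t s ≤ t s' := by
      have : (2 : ℝ) ^ (s + 1) ≤ 2 ^ s' := pow_le_pow_right₀ one_le_two hss'
      simp only [t, pow_succ] at this ⊢
      nlinarith [le_max_left 1 ε⁻¹]
    refine smul_ne_smul_of_mem_closedBall (by linarith) (ht₀ s) h2t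
      (inv_smul_mem_closedBall_of_mem_latticeBox (ht₀ s) (hεt s) hj)
      (inv_smul_mem_closedBall_of_mem_latticeBox (ht₀ s') (hεt s') hj') ?_
    rw [smul_inv_smul₀ (ht₀ s).ne', smul_inv_smul₀ (ht₀ s').ne']
  refine ENNReal.tsum_eq_top_of_le_sum_of_pairwise_disjoint _ _ hdisj
    (δ := ENNReal.ofReal ((ε / 2) ^ n * c ^ p)) (ENNReal.ofReal_pos.2 (by positivity)).ne'
    fun s => ?_
  exact le_sum_latticeBox_maxFn_single_zero_rpow Φ (by linarith) hc hball (ht s) (hεt s) hp hp1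

/-- for `0 < p ≤ 1`, `H^p(ℤⁿ) ⊂ ℓ^p(ℤⁿ)` with `‖b‖_{ℓ^p} ≤ ‖b‖_{H^p}`, and the
inclusion is strict: some `b ∈ ℓ^p(ℤⁿ)` fails to lie in `H^p(ℤⁿ)`. -/
theorem stmt19 (n : ℕ) (hn : 0 < n)
    (Φ : SchwartzMap (EuclideanSpace ℝ (Fin n)) ℝ) (hΦint : (∫ x, Φ x) = 1)
    (p : ℝ) (hp : 0 < p) (hp1 : p ≤ 1) :
    (∀ b : (Fin n → ℤ) → ℝ, elp p b ≤ hpNorm Φ p b) ∧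
    ∃ b : (Fin n → ℤ) → ℝ, elp p b < ⊤ ∧ hpNorm Φ p b = ⊤ := by
  refine ⟨fun b => le_self_add, Pi.single 0 1, by simp [elp_single_zero hp], ?_⟩
  have hΦ : Φ ≠ 0 := by
    rintro rfl
    simp at hΦint
  rw [hpNorm, elpE, tsum_maxFn_single_zero_rpow_eq_top hn hΦ hp hp1,
    ENNReal.top_rpow_of_pos (one_div_pos.2 hp), add_top]
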